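/- (Distinguishability norm vs. Hilbert's projective metric.) In the setting below, let B := C ∩ {v | ⟨e,v⟩ = 1} with C := (C_M)*, let b₁, b₂ ∈ B, set m := inf_C(b₁/b₂) and M₀ := sup_C(b₁/b₂), and assume 0 < m < M₀ < ∞. Then (1/2)‖b₁−b₂‖_(M) = sup_{E∈M} ⟨E, b₁−b₂⟩ ≤ (M₀−1)(1−m)/(M₀−m) ≤ 1/(1+m) − 1/(1+M₀) ≤ tanh(h_C(b₁,b₂)/4). -/

import Mathlib

noncomputable section

variable {V : Type*} [NormedAddCommGroup V] [InnerProductSpace ℝ V]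

/-- A proper cone: closed, convex, closed under nonnegative scaling, pointed and solid. -/
def IsProperCone (C : Set V) : Prop :=
  IsClosed C ∧ Convex ℝ C ∧ (∀ (r : ℝ), 0 ≤ r → ∀ x ∈ C, r • x ∈ C) ∧
    (C ∩ (-C) = {0}) ∧ (Submodule.span ℝ C = ⊤)

/-- `sup_C(a/b) := inf {λ : ℝ | λ • b - a ∈ C}`, as an extended real (`⊤` if no such `λ`). -/
def supRatio (C : Set V) (a b : V) : EReal :=
  sInf ((fun l : ℝ => (l : EReal)) '' {l : ℝ | l • b - a ∈ C})

/-- `inf_C(a/b) := sup {λ : ℝ | a - λ • b ∈ C}`. -/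
def infRatio (C : Set V) (a b : V) : EReal :=
  sSup ((fun l : ℝ => (l : EReal)) '' {l : ℝ | a - l • b ∈ C})

/-- Hilbert's projective metric `h_C(a,b) = ln (sup_C(a/b) * sup_C(b/a)) ∈ [0,∞]`. -/
def hilbertDist (C : Set V) (a b : V) : EReal :=
  if supRatio C a b = ⊤ ∨ supRatio C b a = ⊤ then ⊤
  else ((Real.log ((supRatio C a b).toReal * (supRatio C b a).toReal) : ℝ) : EReal)

/-- The oscillation `osc_C(a/b) = sup_C(a/b) - inf_C(a/b)`. -/
def oscRatio (C : Set V) (a b : V) : EReal :=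
  supRatio C a b - infRatio C a b

variable {V' : Type*} [NormedAddCommGroup V'] [InnerProductSpace ℝ V']

/-- The projective diameter `Δ(T)` of a cone-preserving linear map `T`. -/
def projDiam (C : Set V) (C' : Set V') (T : V →ₗ[ℝ] V') : EReal :=
  ⨆ (a : V) (_ : a ∈ C \ {0}) (b : V) (_ : b ∈ C \ {0}), hilbertDist C' (T a) (T b)

/-- `tanh(x/4)`, with the convention `tanh(⊤/4) = 1`. -/
def tanhQuarter (x : EReal) : ℝ :=
  if x = ⊤ then 1 else Real.tanh (x.toReal / 4)

/-- `tanh(x/2)`, with the convention `tanh(⊤/2) = 1`. -/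
def tanhHalf (x : EReal) : ℝ :=
  if x = ⊤ then 1 else Real.tanh (x.toReal / 2)

/-- The dual cone of `C` (identifying `V` with its dual via the inner product). -/
def dualConeSet (C : Set V) : Set V := {w : V | ∀ c ∈ C, 0 ≤ (inner ℝ w c : ℝ)}

/-- The base norm `‖v‖_B` induced by the cone `C` and the functional `⟨e, ·⟩`. -/
def baseNorm (C : Set V) (e : V) (v : V) : ℝ :=
  sInf {r : ℝ | ∃ cp ∈ C, ∃ cm ∈ C, v = cp - cm ∧ r = (inner ℝ e cp : ℝ) + (inner ℝ e cm : ℝ)}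

/-- The negativity `N_B(v)` induced by the cone `C` and the functional `⟨e, ·⟩`. -/
def negativity (C : Set V) (e : V) (v : V) : ℝ :=
  sInf {r : ℝ | ∃ cp ∈ C, ∃ cm ∈ C, v = cp - cm ∧ r = (inner ℝ e cm : ℝ)}

variable {V : Type*} [NormedAddCommGroup V] [InnerProductSpace ℝ V] in
/-- The cone `C_M := ⋃_{λ ≥ 0} λ • M` generated by a set `M`. -/
def coneOfSet (M : Set V) : Set V := {x : V | ∃ l : ℝ, 0 ≤ l ∧ ∃ E ∈ M, x = l • E}

variable {V : Type*} [NormedAddCommGroup V] [InnerProductSpace ℝ V] in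
/-- The distinguishability norm `‖v‖_(M) := sup_{E ∈ M} ⟨2E - e, v⟩`. -/
noncomputable def distNorm (M : Set V) (e : V) (v : V) : ℝ :=
  sSup {r : ℝ | ∃ E ∈ M, r = (inner ℝ (2 • E - e) v : ℝ)}

variable {V : Type*} [NormedAddCommGroup V] [InnerProductSpace ℝ V] in
/-- `M̃ := {E | 0 ≤_{C_M} E ≤_{C_M} e}`. -/
def mTilde (M : Set V) (e : V) : Set V :=
  {E : V | E ∈ coneOfSet M ∧ e - E ∈ coneOfSet M}

/-!
The extremal ratios are attained because the dual cone `C` is closed, so `p = b₁ - m • b₂` and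
`q = M₀ • b₂ - b₁` lie in `C`. For `E ∈ M` the functionals `⟨E, ·⟩` and `⟨e - E, ·⟩` are
nonnegative on `C` and sum to `1` on `b₁, b₂`; the identity
`(M₀ - m) • (b₁ - b₂) = (M₀ - 1) • p - (1 - m) • q` then gives
`⟨E, b₁ - b₂⟩ ≤ (M₀ - 1)(1 - m)/(M₀ - m)`. The gap to `1/(1 + m) - 1/(1 + M₀)` is
`(m M₀ - 1)² / ((1 + m)(1 + M₀)(M₀ - m))`. Finally `sup_C(b₂/b₁) = 1/m`, so
`h_C(b₁, b₂) = log (M₀/m)`; with `s = √(M₀/m)` one has `tanh (h_C/4) = (s - 1)/(s + 1)`, and the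
last inequality reduces to `(m s - 1)² ≥ 0`.
-/

open Real

section Inequalities

variable {m M : ℝ}

lemma sub_le_of_ratio_bounds {x y : ℝ} (hmM : m < M) (h₁ : m * y ≤ x) (h₂ : x ≤ M * y)
    (h₃ : m * (1 - y) ≤ 1 - x) (h₄ : 1 - x ≤ M * (1 - y)) :
    x - y ≤ (M - 1) * (1 - m) / (M - m) := by
  rw [le_div_iff₀ (sub_pos.2 hmM)]
  calc (x - y) * (M - m) = (M - 1) * (x - m * y) - (1 - m) * (M * y - x) := by ring
    _ ≤ (M - 1) * (x - m * y) := sub_le_self _ (mul_nonneg (by linarith) (by linarith))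
    _ ≤ (M - 1) * (1 - m) := mul_le_mul_of_nonneg_left (by linarith) (by linarith)

lemma div_le_inv_one_add_sub_inv_one_add (hm : -1 < m) (hmM : m < M) :
    (M - 1) * (1 - m) / (M - m) ≤ 1 / (1 + m) - 1 / (1 + M) := by
  rw [div_sub_div _ _ (by linarith) (by linarith),
    div_le_div_iff₀ (by linarith) (mul_pos (by linarith) (by linarith))]
  nlinarith [sq_nonneg (m * M - 1)]

lemma tanh_eq_exp_two_mul (y : ℝ) : tanh y = (exp (2 * y) - 1) / (exp (2 * y) + 1) := by
  rw [tanh_eq, exp_neg, two_mul, exp_add]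
  field_simp

lemma inv_one_add_sub_inv_one_add_le_tanh (hm : 0 < m) (hmM : m < M) :
    1 / (1 + m) - 1 / (1 + M) ≤ tanh (log (M / m) / 4) := by
  rw [tanh_eq_exp_two_mul, show 2 * (log (M / m) / 4) = log (M / m) / 2 by ring]
  set s := exp (log (M / m) / 2)
  have hM : M = m * s ^ 2 := by
    rw [sq, ← exp_add, add_halves, exp_log (div_pos (hm.trans hmM) hm), mul_div_cancel₀ _ hm.ne']
  have hs : 1 < s := one_lt_exp_iff.2 (half_pos (log_pos ((one_lt_div hm).2 hmM)))
  rw [hM, div_sub_div _ _ (by positivity) (by positivity),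
    div_le_div_iff₀ (by positivity) (by positivity)]
  nlinarith [mul_nonneg (sub_nonneg.2 hs.le) (sq_nonneg (m * s - 1))]

end Inequalities

section ConeOfSet

lemma mem_coneOfSet_of_mem {M : Set V} {E : V} (hE : E ∈ M) : E ∈ coneOfSet M :=
  ⟨1, zero_le_one, E, hE, (one_smul ℝ E).symm⟩

lemma inner_nonneg_on_dualConeSet_coneOfSet {M : Set V} {E : V} (hE : E ∈ M) :
    ∀ c ∈ dualConeSet (coneOfSet M), 0 ≤ (inner ℝ E c : ℝ) :=
  fun c hc => real_inner_comm E c ▸ hc E (mem_coneOfSet_of_mem hE)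

lemma isClosed_dualConeSet (K : Set V) : IsClosed (dualConeSet K) := by
  simp only [dualConeSet, Set.ofPred_forall]
  exact isClosed_biInter fun c _ =>
    isClosed_le continuous_const (continuous_id.inner continuous_const)

lemma smul_mem_dualConeSet {K : Set V} {r : ℝ} (hr : 0 ≤ r) {w : V} (hw : w ∈ dualConeSet K) :
    r • w ∈ dualConeSet K := fun c hc => by
  rw [real_inner_smul_left]
  exact mul_nonneg hr (hw c hc)

end ConeOfSet

section Ratios

variable {C : Set V} {a b : V}

lemma isGreatest_of_coe_eq_infRatio (hC : IsClosed C) {m : ℝ} (h : (m : EReal) = infRatio C a b) :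
    IsGreatest {l : ℝ | a - l • b ∈ C} m := by
  have hlub : IsLUB {l : ℝ | a - l • b ∈ C} m :=
    .of_image EReal.coe_le_coe_iff (h ▸ isLUB_sSup _)
  have hclosed : IsClosed {l : ℝ | a - l • b ∈ C} :=
    hC.preimage (continuous_const.sub (continuous_id.smul continuous_const))
  exact ⟨hlub.mem_of_isClosed hlub.nonempty hclosed, hlub.1⟩

lemma isLeast_of_coe_eq_supRatio (hC : IsClosed C) {M : ℝ} (h : (M : EReal) = supRatio C a b) :
    IsLeast {l : ℝ | l • b - a ∈ C} M := by
  have hglb : IsGLB {l : ℝ | l • b - a ∈ C} M :=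
    .of_image EReal.coe_le_coe_iff (h ▸ isGLB_sInf _)
  have hclosed : IsClosed {l : ℝ | l • b - a ∈ C} :=
    hC.preimage ((continuous_id.smul continuous_const).sub continuous_const)
  exact ⟨hglb.mem_of_isClosed hglb.nonempty hclosed, hglb.1⟩

lemma supRatio_eq_of_isLeast {M : ℝ} (h : IsLeast {l : ℝ | l • b - a ∈ C} M) :
    supRatio C a b = M :=
  (EReal.coe_strictMono.monotone.map_isLeast h).isGLB.sInf_eq

lemma isLeast_inv_of_isGreatest (hC : ∀ r : ℝ, 0 ≤ r → ∀ x ∈ C, r • x ∈ C)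
    (hpos : ∀ l : ℝ, l • a - b ∈ C → 0 < l) {m : ℝ} (hm : 0 < m)
    (h : IsGreatest {l : ℝ | a - l • b ∈ C} m) :
    IsLeast {l : ℝ | l • a - b ∈ C} m⁻¹ := by
  refine ⟨?_, fun l hlC => ?_⟩
  · have : m⁻¹ • a - b = m⁻¹ • (a - m • b) := by
      rw [smul_sub, smul_smul, inv_mul_cancel₀ hm.ne', one_smul]
    show m⁻¹ • a - b ∈ C
    exact this ▸ hC _ (inv_nonneg.2 hm.le) _ h.1
  · have hl := hpos l hlC
    have : a - l⁻¹ • b = l⁻¹ • (l • a - b) := by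
      rw [smul_sub, smul_smul, inv_mul_cancel₀ hl.ne', one_smul]
    refine inv_le_of_inv_le₀ hl (h.2 ?_)
    show a - l⁻¹ • b ∈ C
    exact this ▸ hC _ (inv_nonneg.2 hl.le) _ hlC

lemma hilbertDist_eq_log {x y : ℝ} (hx : supRatio C a b = x) (hy : supRatio C b a = y) :
    hilbertDist C a b = (log (x * y) : ℝ) := by
  simp [hilbertDist, hx, hy]

end Ratios

section Base

variable {C : Set V} {e b₁ b₂ : V}

lemma one_le_of_smul_sub_mem (he : ∀ c ∈ C, 0 ≤ (inner ℝ e c : ℝ)) (hb₁ : (inner ℝ e b₁ : ℝ) = 1)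
    (hb₂ : (inner ℝ e b₂ : ℝ) = 1) {l : ℝ} (h : l • b₁ - b₂ ∈ C) : 1 ≤ l := by
  have := he _ h
  rw [inner_sub_right, inner_smul_right, hb₁, hb₂] at this
  linarith

lemma inner_sub_le_of_ratio_bounds {E : V} {m M : ℝ} (hmM : m < M)
    (hE : ∀ c ∈ C, 0 ≤ (inner ℝ E c : ℝ)) (heE : ∀ c ∈ C, 0 ≤ (inner ℝ (e - E) c : ℝ))
    (hb₁ : (inner ℝ e b₁ : ℝ) = 1) (hb₂ : (inner ℝ e b₂ : ℝ) = 1)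
    (hm : b₁ - m • b₂ ∈ C) (hM : M • b₂ - b₁ ∈ C) :
    (inner ℝ E (b₁ - b₂) : ℝ) ≤ (M - 1) * (1 - m) / (M - m) := by
  have h₁ := hE _ hm
  have h₂ := hE _ hM
  have h₃ := heE _ hm
  have h₄ := heE _ hM
  simp only [inner_sub_left, inner_sub_right, inner_smul_right, hb₁, hb₂] at h₁ h₂ h₃ h₄ ⊢
  exact sub_le_of_ratio_bounds hmM (by linarith) (by linarith) (by linarith) (by linarith)

end Base

lemma tanhQuarter_coe (x : ℝ) : tanhQuarter x = tanh (x / 4) := by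
  simp [tanhQuarter]

lemma distNorm_eq_two_mul_sSup {M : Set V} {e v : V} (hv : (inner ℝ e v : ℝ) = 0) :
    distNorm M e v = 2 * sSup {r : ℝ | ∃ E ∈ M, r = (inner ℝ E v : ℝ)} := by
  rw [distNorm, ← smul_eq_mul, ← Real.sSup_smul_of_nonneg zero_le_two]
  congr 1
  ext r
  have h2 : ∀ E, (inner ℝ (2 • E - e) v : ℝ) = 2 * inner ℝ E v := fun E => by
    rw [inner_sub_left, hv, sub_zero, two_smul, inner_add_left, two_mul]
  simp only [Set.mem_smul_set, h2]
  constructor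
  · rintro ⟨E, hE, rfl⟩
    exact ⟨_, ⟨E, hE, rfl⟩, rfl⟩
  · rintro ⟨_, ⟨E, hE, rfl⟩, rfl⟩
    exact ⟨E, hE, rfl⟩

theorem distNorm_vs_hilbert_metric_general
    {V : Type*} [NormedAddCommGroup V] [InnerProductSpace ℝ V]
    (e : V) (M : Set V)
    (hMpt : M ∩ (-M) = {0}) (hMe : ∀ E ∈ M, e - E ∈ M)
    (C : Set V) (hCdef : C = dualConeSet (coneOfSet M))
    (B : Set V) (hBdef : B = C ∩ {v : V | (inner ℝ e v : ℝ) = 1})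
    (b₁ : V) (hb₁ : b₁ ∈ B) (b₂ : V) (hb₂ : b₂ ∈ B)
    (m M₀ : ℝ) (hm : (m : EReal) = infRatio C b₁ b₂) (hM₀ : (M₀ : EReal) = supRatio C b₁ b₂)
    (hm0 : 0 < m) (hmM : m < M₀) :
    (1 / 2) * distNorm M e (b₁ - b₂) = sSup {r : ℝ | ∃ E ∈ M, r = (inner ℝ E (b₁ - b₂) : ℝ)} ∧
    sSup {r : ℝ | ∃ E ∈ M, r = (inner ℝ E (b₁ - b₂) : ℝ)} ≤ (M₀ - 1) * (1 - m) / (M₀ - m) ∧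
    (M₀ - 1) * (1 - m) / (M₀ - m) ≤ 1 / (1 + m) - 1 / (1 + M₀) ∧
    1 / (1 + m) - 1 / (1 + M₀) ≤ tanhQuarter (hilbertDist C b₁ b₂) := by
  subst hCdef hBdef
  obtain ⟨-, hb₁e : (inner ℝ e b₁ : ℝ) = 1⟩ := hb₁
  obtain ⟨-, hb₂e : (inner ℝ e b₂ : ℝ) = 1⟩ := hb₂
  have h0M : (0 : V) ∈ M := (hMpt.symm ▸ rfl : (0 : V) ∈ M ∩ -M).1
  have heM : e ∈ M := by simpa using hMe 0 h0M
  have hmax := isGreatest_of_coe_eq_infRatio (isClosed_dualConeSet _) hm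
  have hmin := isLeast_of_coe_eq_supRatio (isClosed_dualConeSet _) hM₀
  have hinv : supRatio (dualConeSet (coneOfSet M)) b₂ b₁ = (m⁻¹ : ℝ) :=
    supRatio_eq_of_isLeast <| isLeast_inv_of_isGreatest (fun _ hr _ => smul_mem_dualConeSet hr)
      (fun _ hl => one_pos.trans_le (one_le_of_smul_sub_mem
        (inner_nonneg_on_dualConeSet_coneOfSet heM) hb₁e hb₂e hl)) hm0 hmax
  refine ⟨?_, csSup_le ⟨0, 0, h0M, (inner_zero_left _).symm⟩ ?_,
    div_le_inv_one_add_sub_inv_one_add (by linarith) hmM, ?_⟩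
  · rw [distNorm_eq_two_mul_sSup (by rw [inner_sub_right, hb₁e, hb₂e, sub_self])]
    ring
  · rintro _ ⟨E, hE, rfl⟩
    exact inner_sub_le_of_ratio_bounds hmM (inner_nonneg_on_dualConeSet_coneOfSet hE)
      (inner_nonneg_on_dualConeSet_coneOfSet (hMe E hE)) hb₁e hb₂e hmax.1 hmin.1
  · rw [hilbertDist_eq_log hM₀.symm hinv, tanhQuarter_coe, ← div_eq_mul_inv]
    exact inv_one_add_sub_inv_one_add_le_tanh hm0 hmM

/-- **Distinguishability norm vs. Hilbert's projective metric.** -/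
theorem distNorm_vs_hilbert_metric
    {V : Type*} [NormedAddCommGroup V] [InnerProductSpace ℝ V] [FiniteDimensional ℝ V]
    (e : V) (M : Set V)
    (hMcl : IsClosed M) (hMconv : Convex ℝ M) (hMint : (interior M).Nonempty)
    (hMpt : M ∩ (-M) = {0}) (hMe : ∀ E ∈ M, e - E ∈ M)
    (C : Set V) (hCdef : C = dualConeSet (coneOfSet M))
    (B : Set V) (hBdef : B = C ∩ {v : V | (inner ℝ e v : ℝ) = 1})
    (b₁ : V) (hb₁ : b₁ ∈ B) (b₂ : V) (hb₂ : b₂ ∈ B)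
    (m M₀ : ℝ) (hm : (m : EReal) = infRatio C b₁ b₂) (hM₀ : (M₀ : EReal) = supRatio C b₁ b₂)
    (hm0 : 0 < m) (hmM : m < M₀) :
    (1 / 2) * distNorm M e (b₁ - b₂) = sSup {r : ℝ | ∃ E ∈ M, r = (inner ℝ E (b₁ - b₂) : ℝ)} ∧
    sSup {r : ℝ | ∃ E ∈ M, r = (inner ℝ E (b₁ - b₂) : ℝ)} ≤ (M₀ - 1) * (1 - m) / (M₀ - m) ∧
    (M₀ - 1) * (1 - m) / (M₀ - m) ≤ 1 / (1 + m) - 1 / (1 + M₀) ∧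
    1 / (1 + m) - 1 / (1 + M₀) ≤ tanhQuarter (hilbertDist C b₁ b₂) :=
  distNorm_vs_hilbert_metric_general e M hMpt hMe C hCdef B hBdef b₁ hb₁ b₂ hb₂ m M₀ hm hM₀ hm0 hmM

end
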